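/- arXiv:2509.03810 — 3 statements merged into one kernel-verified Lean document; each statement's English description precedes it below -/
import Mathlib

section
/- Let H be a real inner product space, let γ > 0 and r ≥ 0 be real numbers, and let θ, w, w', η ∈ H. Set θ' = θ − γ·η, and assume ‖θ'‖ ≤ r and ‖w'‖ ≤ r. Then ⟨η, θ − w⟩ ≤ (1/(2γ))·‖θ − w‖² − (1/(2γ))·‖θ' − w'‖² − (1/(2γ))·‖w' − w‖² + (2r/γ)·‖w − w'‖ + (γ/2)·‖η‖². -/
open scoped RealInnerProductSpace

/-- Per-step inequality in the dynamic regret bound for online gradient descent: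
for an OGD update `θ' = θ - γ • η` with norm bounds `‖θ'‖ ≤ r`, `‖w'‖ ≤ r`,
the inner product `⟪η, θ - w⟫` is bounded via a telescoping-ready expression. -/
theorem ogd_per_step_inequality {H : Type*} [NormedAddCommGroup H] [InnerProductSpace ℝ H]
    (γ r : ℝ) (hγ : 0 < γ) (hr : 0 ≤ r)
    (θ w w' η θ' : H) (hθ' : θ' = θ - γ • η)
    (hθ'r : ‖θ'‖ ≤ r) (hw'r : ‖w'‖ ≤ r) :
    ⟪η, θ - w⟫ ≤
      (1 / (2 * γ)) * ‖θ - w‖ ^ 2 - (1 / (2 * γ)) * ‖θ' - w'‖ ^ 2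
        - (1 / (2 * γ)) * ‖w' - w‖ ^ 2 + (2 * r / γ) * ‖w - w'‖ + (γ / 2) * ‖η‖ ^ 2 := by
  have h1 : ‖θ' - w‖ ^ 2 = ‖θ - w‖ ^ 2 - 2 * γ * ⟪η, θ - w⟫ + γ ^ 2 * ‖η‖ ^ 2 := by
    have : θ' - w = (θ - w) - γ • η := by rw [hθ']; abel
    rw [this, @norm_sub_sq_real, norm_smul, real_inner_smul_right,
      real_inner_comm]
    simp [abs_of_pos hγ]
    ring
  have h2 : ‖θ' - w‖ ^ 2 = ‖θ' - w'‖ ^ 2 + 2 * ⟪θ' - w', w' - w⟫ + ‖w' - w‖ ^ 2 := by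
    have : θ' - w = (θ' - w') + (w' - w) := by abel
    rw [this, @norm_add_sq_real]
  have h3 : -(2 * r) * ‖w - w'‖ ≤ ⟪θ' - w', w' - w⟫ := by
    have hb : |⟪θ' - w', w' - w⟫| ≤ ‖θ' - w'‖ * ‖w' - w‖ := abs_real_inner_le_norm _ _
    have h4 : ‖θ' - w'‖ ≤ 2 * r := by
      calc ‖θ' - w'‖ ≤ ‖θ'‖ + ‖w'‖ := norm_sub_le _ _
        _ ≤ 2 * r := by linarith
    have h5 : ‖w' - w‖ = ‖w - w'‖ := norm_sub_rev _ _
    have := neg_abs_le ⟪θ' - w', w' - w⟫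
    nlinarith [norm_nonneg (w - w')]
  have hγ2 : (0:ℝ) < 2 * γ := by linarith
  have key : 2 * γ * ⟪η, θ - w⟫ ≤
      ‖θ - w‖ ^ 2 - ‖θ' - w'‖ ^ 2 - ‖w' - w‖ ^ 2 + 4 * r * ‖w - w'‖ + γ ^ 2 * ‖η‖ ^ 2 := by
    nlinarith
  have hc : (0:ℝ) < 1 / (2 * γ) := by positivity
  have := mul_le_mul_of_nonneg_left key hc.le
  calc ⟪η, θ - w⟫ = 1 / (2 * γ) * (2 * γ * ⟪η, θ - w⟫) := by field_simp
    _ ≤ 1 / (2 * γ) * (‖θ - w‖ ^ 2 - ‖θ' - w'‖ ^ 2 - ‖w' - w‖ ^ 2 + 4 * r * ‖w - w'‖ + γ ^ 2 * ‖η‖ ^ 2) := this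
    _ = 1 / (2 * γ) * ‖θ - w‖ ^ 2 - 1 / (2 * γ) * ‖θ' - w'‖ ^ 2 - 1 / (2 * γ) * ‖w' - w‖ ^ 2 + 2 * r / γ * ‖w - w'‖ + γ / 2 * ‖η‖ ^ 2 := by
        field_simp; ring
end

section
/- Let H be a real inner product space, let γ > 0 and r ≥ 0 be real numbers, and let T be a positive integer. Let θ_1, …, θ_{T+1} ∈ H, η_1, …, η_T ∈ H, and w_1, …, w_{T+1} ∈ H satisfy θ_{t+1} = θ_t − γ·η_t for all 1 ≤ t ≤ T, and ‖θ_t‖ ≤ r and ‖w_t‖ ≤ r for all 1 ≤ t ≤ T+1. Then Σ_{t=1}^{T} ⟨η_t, θ_t − w_t⟩ ≤ (2r²)/γ + (2r/γ)·Σ_{t=1}^{T} ‖w_t − w_{t+1}‖ + (γ/2)·Σ_{t=1}^{T} ‖η_t‖². -/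
open scoped RealInnerProductSpace

/-!
Expanding `‖θₜ₊₁ - wₜ‖²` for the step `θₜ₊₁ = θₜ - γ ηₜ` gives
`2γ ⟪ηₜ, θₜ - wₜ⟫ = ‖θₜ - wₜ‖² - ‖θₜ₊₁ - wₜ‖² + γ² ‖ηₜ‖²`. Replacing the comparator `wₜ` by `wₜ₊₁`
changes `‖θₜ₊₁ - ·‖²` by at most `4r ‖wₜ - wₜ₊₁‖`, since all points lie in the ball of radius `r`.
The distances `‖θₜ - wₜ‖²` then telescope, leaving `‖θ₁ - w₁‖² ≤ 4r²`.
-/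

section Norms

variable {E : Type*} [SeminormedAddCommGroup E]

lemma norm_sub_le_of_norm_le {x y : E} {r : ℝ} (hx : ‖x‖ ≤ r) (hy : ‖y‖ ≤ r) :
    ‖x - y‖ ≤ 2 * r := by
  linarith [norm_sub_le x y]

lemma sq_norm_sub_sq_norm_le (a b : E) : ‖a‖ ^ 2 - ‖b‖ ^ 2 ≤ ‖a - b‖ * (‖a‖ + ‖b‖) := by
  rw [sq_sub_sq, mul_comm]
  exact mul_le_mul_of_nonneg_right (norm_sub_norm_le a b) (by positivity)

lemma sq_norm_sub_le_sq_norm_sub_add {x w w' : E} {r : ℝ}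
    (hx : ‖x‖ ≤ r) (hw : ‖w‖ ≤ r) (hw' : ‖w'‖ ≤ r) :
    ‖x - w'‖ ^ 2 ≤ ‖x - w‖ ^ 2 + 4 * r * ‖w - w'‖ := by
  have hsum : ‖x - w'‖ + ‖x - w‖ ≤ 4 * r := by
    linarith [norm_sub_le_of_norm_le hx hw, norm_sub_le_of_norm_le hx hw']
  have hdiff : (x - w') - (x - w) = w - w' := by abel
  calc ‖x - w'‖ ^ 2 ≤ ‖x - w‖ ^ 2 + ‖w - w'‖ * (‖x - w'‖ + ‖x - w‖) := by
        linarith [hdiff ▸ sq_norm_sub_sq_norm_le (x - w') (x - w)]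
    _ ≤ ‖x - w‖ ^ 2 + 4 * r * ‖w - w'‖ := by nlinarith [norm_nonneg (w - w')]

end Norms

section GradientStep

variable {H : Type*} [NormedAddCommGroup H] [InnerProductSpace ℝ H]

lemma two_mul_inner_eq_sq_norm_sub_sq_norm_sub_smul (γ : ℝ) (η x : H) :
    2 * γ * ⟪η, x⟫ = ‖x‖ ^ 2 - ‖x - γ • η‖ ^ 2 + γ ^ 2 * ‖η‖ ^ 2 := by
  rw [norm_sub_sq_real, real_inner_smul_right, norm_smul, Real.norm_eq_abs, mul_pow, sq_abs,
    real_inner_comm]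
  ring

lemma inner_le_of_gradient_step {γ r : ℝ} (hγ : 0 < γ) {θ θ' η w w' : H}
    (hstep : θ' = θ - γ • η) (hθ' : ‖θ'‖ ≤ r) (hw : ‖w‖ ≤ r) (hw' : ‖w'‖ ≤ r) :
    ⟪η, θ - w⟫ ≤ (‖θ - w‖ ^ 2 - ‖θ' - w'‖ ^ 2) / (2 * γ) + (2 * r / γ) * ‖w - w'‖
      + (γ / 2) * ‖η‖ ^ 2 := by
  have hexpand := two_mul_inner_eq_sq_norm_sub_sq_norm_sub_smul γ η (θ - w)
  rw [show θ - w - γ • η = θ' - w by rw [hstep]; abel] at hexpand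
  have hshift := sq_norm_sub_le_sq_norm_sub_add hθ' hw hw'
  rw [← sub_nonneg]
  have hrhs : (‖θ - w‖ ^ 2 - ‖θ' - w'‖ ^ 2) / (2 * γ) + (2 * r / γ) * ‖w - w'‖
      + (γ / 2) * ‖η‖ ^ 2 - ⟪η, θ - w⟫
      = (‖θ' - w‖ ^ 2 + 4 * r * ‖w - w'‖ - ‖θ' - w'‖ ^ 2) / (2 * γ) := by
    field_simp
    linarith
  rw [hrhs]
  exact div_nonneg (by linarith) (by positivity)

end GradientStep

theorem ogd_telescoped_inequality_general {H : Type*} [NormedAddCommGroup H] [InnerProductSpace ℝ H]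
    (γ r : ℝ) (hγ : 0 < γ) (T : ℕ) (hT : 0 < T)
    (θ η w : ℕ → H)
    (hupd : ∀ t, 1 ≤ t → t ≤ T → θ (t + 1) = θ t - γ • η t)
    (hθ : ∀ t, 1 ≤ t → t ≤ T + 1 → ‖θ t‖ ≤ r)
    (hw : ∀ t, 1 ≤ t → t ≤ T + 1 → ‖w t‖ ≤ r) :
    ∑ t ∈ Finset.Icc 1 T, ⟪η t, θ t - w t⟫ ≤
      2 * r ^ 2 / γ + (2 * r / γ) * ∑ t ∈ Finset.Icc 1 T, ‖w t - w (t + 1)‖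
        + (γ / 2) * ∑ t ∈ Finset.Icc 1 T, ‖η t‖ ^ 2 := by
  set a : ℕ → ℝ := fun t => ‖θ t - w t‖ ^ 2
  have htelescope : ∑ t ∈ Finset.Icc 1 T, (a t - a (t + 1)) = a 1 - a (T + 1) := by
    rw [← neg_sub, ← Finset.sum_Icc_sub hT a, ← Finset.sum_neg_distrib]
    simp only [neg_sub]
  have hinit : a 1 ≤ 4 * r ^ 2 := by
    have := norm_sub_le_of_norm_le (hθ 1 le_rfl (by omega)) (hw 1 le_rfl (by omega))
    nlinarith [norm_nonneg (θ 1 - w 1)]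
  have hfinal : (a 1 - a (T + 1)) / (2 * γ) ≤ 2 * r ^ 2 / γ := by
    rw [div_le_div_iff₀ (by positivity) hγ]
    nlinarith [sq_nonneg ‖θ (T + 1) - w (T + 1)‖]
  calc ∑ t ∈ Finset.Icc 1 T, ⟪η t, θ t - w t⟫
      ≤ ∑ t ∈ Finset.Icc 1 T, ((a t - a (t + 1)) / (2 * γ)
          + (2 * r / γ) * ‖w t - w (t + 1)‖ + (γ / 2) * ‖η t‖ ^ 2) := by
        refine Finset.sum_le_sum fun t ht => ?_
        obtain ⟨h1, hT'⟩ := Finset.mem_Icc.mp ht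
        exact inner_le_of_gradient_step hγ (hupd t h1 hT') (hθ (t + 1) (by omega) (by omega))
          (hw t h1 (by omega)) (hw (t + 1) (by omega) (by omega))
    _ = (a 1 - a (T + 1)) / (2 * γ) + (2 * r / γ) * ∑ t ∈ Finset.Icc 1 T, ‖w t - w (t + 1)‖
          + (γ / 2) * ∑ t ∈ Finset.Icc 1 T, ‖η t‖ ^ 2 := by
        rw [Finset.sum_add_distrib, Finset.sum_add_distrib, ← Finset.sum_div, htelescope,
          ← Finset.mul_sum, ← Finset.mul_sum]
    _ ≤ _ := by gcongr

/-- Telescoped form of the per-step OGD inequality: for iterates produced by online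
gradient descent `θ (t+1) = θ t - γ • η t` and comparators `w t`, all contained in the
ball of radius `r`, the summed inner products are bounded by `2r²/γ + (2r/γ)·V + (γ/2)·Σ‖η‖²`. -/
theorem ogd_telescoped_inequality {H : Type*} [NormedAddCommGroup H] [InnerProductSpace ℝ H]
    (γ r : ℝ) (hγ : 0 < γ) (hr : 0 ≤ r) (T : ℕ) (hT : 0 < T)
    (θ η w : ℕ → H)
    (hupd : ∀ t, 1 ≤ t → t ≤ T → θ (t + 1) = θ t - γ • η t)
    (hθ : ∀ t, 1 ≤ t → t ≤ T + 1 → ‖θ t‖ ≤ r)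
    (hw : ∀ t, 1 ≤ t → t ≤ T + 1 → ‖w t‖ ≤ r) :
    ∑ t ∈ Finset.Icc 1 T, ⟪η t, θ t - w t⟫ ≤
      2 * r ^ 2 / γ + (2 * r / γ) * ∑ t ∈ Finset.Icc 1 T, ‖w t - w (t + 1)‖
        + (γ / 2) * ∑ t ∈ Finset.Icc 1 T, ‖η t‖ ^ 2 :=
  ogd_telescoped_inequality_general γ r hγ T hT θ η w hupd hθ hw
end

section
/- Let (Ω, 𝓕, P) be a probability space with a filtration 𝓕_1 ⊆ 𝓕_2 ⊆ … ⊆ 𝓕, let d, T be positive integers, and let γ > 0, r ≥ 0, b ≥ 0, G ≥ 0, λ ≥ 0 be real numbers. For each 1 ≤ t ≤ T let ℓ_t : ℝ^d → ℝ be a differentiable convex function, and let w_1, …, w_{T+1} ∈ ℝ^d be deterministic comparators with ‖w_t‖ ≤ r. Let θ_1, …, θ_{T+1} : Ω → ℝ^d be random iterates and η_1, …, η_T : Ω → ℝ^d square-integrable random gradient estimates such that: θ_t is 𝓕_t-measurable and ‖θ_t‖ ≤ r almost surely for each t; θ_{t+1} = θ_t − γ·η_t almost surely for each 1 ≤ t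 ≤ T; ‖E[η_t | 𝓕_t] − ∇ℓ_t(θ_t)‖ ≤ b almost surely for each t; E‖η_t‖² ≤ G + λ for each t; and ℓ_t(θ_t) is integrable for each t. Then E[ Σ_{t=1}^{T} (ℓ_t(θ_t) − ℓ_t(w_t)) ] ≤ 2·T·b·r + (2r²)/γ + (2r/γ)·Σ_{t=1}^{T} ‖w_t − w_{t+1}‖ + (T·γ·(G + λ))/2. -/
open MeasureTheory
open scoped RealInnerProductSpace

/-!
Convexity bounds the instantaneous regret `ℓ_t(θ_t) - ℓ_t(w_t)` by `⟪∇ℓ_t(θ_t), θ_t - w_t⟫`.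
Since `θ_t - w_t` is `𝓕_t`-measurable and bounded, the pull-out property of conditional
expectation lets one replace `∇ℓ_t(θ_t)` by `η_t` in expectation, at a cost `2rb` coming from
the bias. Expanding `‖θ_{t+1} - w_t‖²` for the update `θ_{t+1} = θ_t - γη_t` turns
`⟪θ_t - w_t, η_t⟫` into a difference of squared distances plus `γ‖η_t‖²/2`; moving the
comparator from `w_t` to `w_{t+1}` costs `4r‖w_t - w_{t+1}‖`. The squared distances then
telescope, and the first one is at most `4r²`.
-/

section Convexity

variable {E : Type*}

theorem ConvexOn.le_sub_of_hasFDerivAt [NormedAddCommGroup E] [NormedSpace ℝ E]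
    {S : Set E} {f : E → ℝ} {f' : E →L[ℝ] ℝ} {x y : E} (hf : ConvexOn ℝ S f)
    (hx : x ∈ S) (hy : y ∈ S) (hf' : HasFDerivAt f f' x) :
    f' (y - x) ≤ f y - f x := by
  set L : ℝ →ᵃ[ℝ] E := AffineMap.lineMap x y
  have hline : ConvexOn ℝ (L ⁻¹' S) (f ∘ L) := hf.comp_affineMap L
  have hderiv : HasDerivAt (f ∘ L) (f' (y - x)) 0 := by
    refine HasFDerivAt.comp_hasDerivAt (0 : ℝ) ?_ AffineMap.hasDerivAt_lineMap
    simpa [L] using hf'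
  simpa [L, slope_def_field] using
    hline.le_slope_of_hasDerivAt (by simpa [L] using hx) (by simpa [L] using hy) one_pos hderiv

theorem ConvexOn.sub_le_inner_gradient [NormedAddCommGroup E] [InnerProductSpace ℝ E]
    [CompleteSpace E] {S : Set E} {f : E → ℝ} {x y : E} (hf : ConvexOn ℝ S f)
    (hx : x ∈ S) (hy : y ∈ S) (hd : DifferentiableAt ℝ f x) :
    f x - f y ≤ ⟪gradient f x, x - y⟫ := by
  have h := hf.le_sub_of_hasFDerivAt hx hy hd.hasGradientAt.hasFDerivAt
  rw [InnerProductSpace.toDual_apply_apply] at h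
  rw [← neg_sub y x, inner_neg_right]
  linarith

end Convexity

theorem sq_norm_sub_sub_sq_norm_sub_le {E : Type*} [SeminormedAddCommGroup E] (x a b : E) :
    ‖x - a‖ ^ 2 - ‖x - b‖ ^ 2 ≤ ‖a - b‖ * (‖x - a‖ + ‖x - b‖) := by
  have h : |‖x - a‖ - ‖x - b‖| ≤ ‖a - b‖ := by
    simpa [norm_sub_rev b a] using abs_norm_sub_norm_le (x - a) (x - b)
  nlinarith [le_abs_self (‖x - a‖ - ‖x - b‖), norm_nonneg (x - a), norm_nonneg (x - b)]

section GradientStep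

variable {E : Type*} [NormedAddCommGroup E] [InnerProductSpace ℝ E]

theorem inner_sub_eq_of_gradient_step (θ w η : E) {γ : ℝ} (hγ : γ ≠ 0) :
    ⟪θ - w, η⟫ = (‖θ - w‖ ^ 2 - ‖θ - γ • η - w‖ ^ 2) / (2 * γ) + γ / 2 * ‖η‖ ^ 2 := by
  rw [sub_right_comm θ, norm_sub_sq_real (θ - w), real_inner_smul_right, norm_smul,
    Real.norm_eq_abs, mul_pow, sq_abs]
  field_simp
  ring

theorem inner_sub_le_of_gradient_step {θ w w' η : E} {γ r : ℝ} (hγ : 0 < γ)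
    (hθ' : ‖θ - γ • η‖ ≤ r) (hw : ‖w‖ ≤ r) (hw' : ‖w'‖ ≤ r) :
    ⟪θ - w, η⟫ ≤ (‖θ - w‖ ^ 2 - ‖θ - γ • η - w'‖ ^ 2) / (2 * γ)
      + 2 * r / γ * ‖w - w'‖ + γ / 2 * ‖η‖ ^ 2 := by
  set θ' := θ - γ • η
  have hmove : ‖θ' - w'‖ ^ 2 - ‖θ' - w‖ ^ 2 ≤ 4 * r * ‖w - w'‖ := by
    have hsum : ‖θ' - w'‖ + ‖θ' - w‖ ≤ 4 * r := by
      linarith [norm_sub_le θ' w', norm_sub_le θ' w]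
    calc ‖θ' - w'‖ ^ 2 - ‖θ' - w‖ ^ 2 ≤ ‖w' - w‖ * (‖θ' - w'‖ + ‖θ' - w‖) :=
          sq_norm_sub_sub_sq_norm_sub_le θ' w' w
      _ ≤ ‖w - w'‖ * (4 * r) := by rw [norm_sub_rev]; gcongr
      _ = 4 * r * ‖w - w'‖ := mul_comm _ _
  rw [inner_sub_eq_of_gradient_step θ w η hγ.ne']
  calc (‖θ - w‖ ^ 2 - ‖θ' - w‖ ^ 2) / (2 * γ) + γ / 2 * ‖η‖ ^ 2
      ≤ (‖θ - w‖ ^ 2 - ‖θ' - w'‖ ^ 2 + 4 * r * ‖w - w'‖) / (2 * γ) + γ / 2 * ‖η‖ ^ 2 := by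
        gcongr; linarith
    _ = _ := by field_simp; ring

end GradientStep

section Expectation

variable {Ω E : Type*} {m mΩ : MeasurableSpace Ω} {μ : Measure Ω} [NormedAddCommGroup E]

theorem ae_norm_sub_le_of_norm_le {X : Ω → E} {w : E} {r : ℝ} (hX : ∀ᵐ ω ∂μ, ‖X ω‖ ≤ r)
    (hw : ‖w‖ ≤ r) : ∀ᵐ ω ∂μ, ‖X ω - w‖ ≤ 2 * r :=
  hX.mono fun ω h ↦ by linarith [norm_sub_le (X ω) w]

theorem integral_sq_norm_sub_le [IsProbabilityMeasure μ] {X : Ω → E} {w : E} {r : ℝ}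
    (hX : ∀ᵐ ω ∂μ, ‖X ω‖ ≤ r) (hw : ‖w‖ ≤ r) : ∫ ω, ‖X ω - w‖ ^ 2 ∂μ ≤ (2 * r) ^ 2 := by
  have h := norm_integral_le_of_norm_le_const (μ := μ) (f := fun ω ↦ ‖X ω - w‖ ^ 2)
    ((ae_norm_sub_le_of_norm_le hX hw).mono fun ω h ↦ by
      simpa using pow_le_pow_left₀ (norm_nonneg _) h 2)
  simpa using (le_abs_self _).trans h

variable [InnerProductSpace ℝ E]

theorem integral_inner_le_of_gradient_step [IsProbabilityMeasure μ] {θ θ' η : Ω → E}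
    {w w' : E} {γ r : ℝ} (hγ : 0 < γ) (hθ : AEStronglyMeasurable θ μ)
    (hθr : ∀ᵐ ω ∂μ, ‖θ ω‖ ≤ r) (hθ'r : ∀ᵐ ω ∂μ, ‖θ' ω‖ ≤ r) (hη : MemLp η 2 μ)
    (hstep : ∀ᵐ ω ∂μ, θ' ω = θ ω - γ • η ω) (hw : ‖w‖ ≤ r) (hw' : ‖w'‖ ≤ r) :
    ∫ ω, ⟪θ ω - w, η ω⟫ ∂μ ≤ (∫ ω, ‖θ ω - w‖ ^ 2 ∂μ - ∫ ω, ‖θ' ω - w'‖ ^ 2 ∂μ) / (2 * γ)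
      + 2 * r / γ * ‖w - w'‖ + γ / 2 * ∫ ω, ‖η ω‖ ^ 2 ∂μ := by
  have hθ' : AEStronglyMeasurable θ' μ :=
    (hθ.sub (hη.aestronglyMeasurable.const_smul γ)).congr (hstep.mono fun _ h ↦ h.symm)
  have hdist : Integrable (fun ω ↦ ‖θ ω - w‖ ^ 2) μ :=
    ((MemLp.of_bound hθ r hθr).sub (memLp_const w)).norm.integrable_sq
  have hdist' : Integrable (fun ω ↦ ‖θ' ω - w'‖ ^ 2) μ :=
    ((MemLp.of_bound hθ' r hθ'r).sub (memLp_const w')).norm.integrable_sq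
  have hηsq : Integrable (fun ω ↦ ‖η ω‖ ^ 2) μ := hη.norm.integrable_sq
  have hinner : Integrable (fun ω ↦ ⟪θ ω - w, η ω⟫) μ :=
    (innerSL ℝ).integrable_of_bilin_of_bdd_left (2 * r) (hθ.sub aestronglyMeasurable_const)
      (ae_norm_sub_le_of_norm_le hθr hw) (hη.integrable one_le_two)
  have hdiff : Integrable (fun ω ↦ (‖θ ω - w‖ ^ 2 - ‖θ' ω - w'‖ ^ 2) / (2 * γ)) μ :=
    (hdist.sub hdist').div_const _
  have hdiff' : Integrable
      (fun ω ↦ (‖θ ω - w‖ ^ 2 - ‖θ' ω - w'‖ ^ 2) / (2 * γ) + 2 * r / γ * ‖w - w'‖) μ :=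
    hdiff.add (integrable_const _)
  have hpoint : ∀ᵐ ω ∂μ, ⟪θ ω - w, η ω⟫ ≤ (‖θ ω - w‖ ^ 2 - ‖θ' ω - w'‖ ^ 2) / (2 * γ)
      + 2 * r / γ * ‖w - w'‖ + γ / 2 * ‖η ω‖ ^ 2 := by
    filter_upwards [hstep, hθ'r] with ω hs hr'
    rw [hs] at hr' ⊢
    exact inner_sub_le_of_gradient_step hγ hr' hw hw'
  calc ∫ ω, ⟪θ ω - w, η ω⟫ ∂μ ≤ ∫ ω, ((‖θ ω - w‖ ^ 2 - ‖θ' ω - w'‖ ^ 2) / (2 * γ)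
        + 2 * r / γ * ‖w - w'‖ + γ / 2 * ‖η ω‖ ^ 2) ∂μ :=
        integral_mono_ae hinner (hdiff'.add (hηsq.const_mul _)) hpoint
    _ = _ := by
        rw [integral_add hdiff' (hηsq.const_mul _),
          integral_add hdiff (integrable_const _), integral_div, integral_sub hdist hdist',
          integral_const, integral_const_mul, probReal_univ, one_smul]

variable [CompleteSpace E]

theorem integral_inner_condExp_of_bound (hm : m ≤ mΩ) [IsFiniteMeasure μ] {X f : Ω → E}
    (hX : StronglyMeasurable[m] X) {c : ℝ} (hXc : ∀ᵐ ω ∂μ, ‖X ω‖ ≤ c) (hf : Integrable f μ) :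
    ∫ ω, ⟪X ω, (μ[f|m]) ω⟫ ∂μ = ∫ ω, ⟪X ω, f ω⟫ ∂μ :=
  calc ∫ ω, ⟪X ω, (μ[f|m]) ω⟫ ∂μ = ∫ ω, (μ[fun ω ↦ ⟪X ω, f ω⟫|m]) ω ∂μ :=
        integral_congr_ae
          (condExp_stronglyMeasurable_bilin_of_bound (innerSL ℝ) hm hX hf c hXc).symm
    _ = ∫ ω, ⟪X ω, f ω⟫ ∂μ := integral_condExp hm

theorem integral_sub_le_integral_inner_add_of_condExp_bias [IsProbabilityMeasure μ]
    (hm : m ≤ mΩ) {f : E → ℝ} (hf : ConvexOn ℝ Set.univ f) (hd : Differentiable ℝ f)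
    {θ η : Ω → E} {w : E} {b c : ℝ} (hθ : StronglyMeasurable[m] θ)
    (hθc : ∀ᵐ ω ∂μ, ‖θ ω - w‖ ≤ c) (hη : Integrable η μ)
    (hbias : ∀ᵐ ω ∂μ, ‖(μ[η|m]) ω - gradient f (θ ω)‖ ≤ b)
    (hfθ : Integrable (fun ω ↦ f (θ ω)) μ) :
    ∫ ω, (f (θ ω) - f w) ∂μ ≤ ∫ ω, ⟪θ ω - w, η ω⟫ ∂μ + c * b := by
  have hX : StronglyMeasurable[m] fun ω ↦ θ ω - w := hθ.sub stronglyMeasurable_const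
  have hpoint : ∀ᵐ ω ∂μ, f (θ ω) - f w ≤ ⟪θ ω - w, (μ[η|m]) ω⟫ + c * b := by
    filter_upwards [hθc, hbias] with ω hc hb
    have hconv := hf.sub_le_inner_gradient (Set.mem_univ _) (Set.mem_univ w) (hd (θ ω))
    have herr : ⟪θ ω - w, gradient f (θ ω) - (μ[η|m]) ω⟫ ≤ c * b :=
      (real_inner_le_norm _ _).trans <| mul_le_mul hc (by rwa [norm_sub_rev])
        (norm_nonneg _) ((norm_nonneg _).trans hc)
    rw [real_inner_comm] at hconv
    rw [inner_sub_right] at herr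
    linarith
  have hint : Integrable (fun ω ↦ ⟪θ ω - w, (μ[η|m]) ω⟫) μ :=
    (innerSL ℝ).integrable_of_bilin_of_bdd_left c (hX.mono hm).aestronglyMeasurable hθc
      integrable_condExp
  calc ∫ ω, (f (θ ω) - f w) ∂μ ≤ ∫ ω, (⟪θ ω - w, (μ[η|m]) ω⟫ + c * b) ∂μ :=
        integral_mono_ae (hfθ.sub (integrable_const _)) (hint.add (integrable_const _)) hpoint
    _ = ∫ ω, ⟪θ ω - w, (μ[η|m]) ω⟫ ∂μ + c * b := by
        rw [integral_add hint (integrable_const _), integral_const, probReal_univ, one_smul]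
    _ = ∫ ω, ⟪θ ω - w, η ω⟫ ∂μ + c * b := by
        rw [integral_inner_condExp_of_bound hm hX hθc hη]

theorem integral_sub_le_of_gradient_step [IsProbabilityMeasure μ] (hm : m ≤ mΩ) {f : E → ℝ}
    (hf : ConvexOn ℝ Set.univ f) (hd : Differentiable ℝ f) {θ θ' η : Ω → E} {w w' : E}
    {γ r b : ℝ} (hγ : 0 < γ) (hθ : StronglyMeasurable[m] θ) (hθr : ∀ᵐ ω ∂μ, ‖θ ω‖ ≤ r)
    (hθ'r : ∀ᵐ ω ∂μ, ‖θ' ω‖ ≤ r) (hη : MemLp η 2 μ) (hstep : ∀ᵐ ω ∂μ, θ' ω = θ ω - γ • η ω)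
    (hbias : ∀ᵐ ω ∂μ, ‖(μ[η|m]) ω - gradient f (θ ω)‖ ≤ b)
    (hfθ : Integrable (fun ω ↦ f (θ ω)) μ) (hw : ‖w‖ ≤ r) (hw' : ‖w'‖ ≤ r) :
    ∫ ω, (f (θ ω) - f w) ∂μ ≤ (∫ ω, ‖θ ω - w‖ ^ 2 ∂μ - ∫ ω, ‖θ' ω - w'‖ ^ 2 ∂μ) / (2 * γ)
      + (2 * r / γ * ‖w - w'‖ + (2 * r * b + γ / 2 * ∫ ω, ‖η ω‖ ^ 2 ∂μ)) := by
  have hbias' := integral_sub_le_integral_inner_add_of_condExp_bias hm hf hd hθ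
    (ae_norm_sub_le_of_norm_le hθr hw) (hη.integrable one_le_two) hbias hfθ
  have hstep' := integral_inner_le_of_gradient_step hγ (hθ.mono hm).aestronglyMeasurable hθr
    hθ'r hη hstep hw hw'
  linarith

end Expectation

theorem sum_Icc_le_of_le_telescoping {s a u : ℕ → ℝ} {T : ℕ} {κ A : ℝ} (hκ : 0 < κ)
    (h : ∀ t ∈ Finset.Icc 1 T, s t ≤ (a t - a (t + 1)) / κ + u t) (ha₁ : a 1 ≤ A)
    (ha : 0 ≤ a (T + 1)) :
    ∑ t ∈ Finset.Icc 1 T, s t ≤ A / κ + ∑ t ∈ Finset.Icc 1 T, u t := by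
  have htel : ∑ t ∈ Finset.Icc 1 T, (a t - a (t + 1)) = a 1 - a (T + 1) := by
    rw [← Finset.Ico_add_one_right_eq_Icc, ← neg_sub (a (T + 1)),
      ← Finset.sum_Ico_sub a (by omega : 1 ≤ T + 1), ← Finset.sum_neg_distrib]
    simp only [neg_sub]
  calc ∑ t ∈ Finset.Icc 1 T, s t ≤ ∑ t ∈ Finset.Icc 1 T, ((a t - a (t + 1)) / κ + u t) :=
        Finset.sum_le_sum h
    _ = (a 1 - a (T + 1)) / κ + ∑ t ∈ Finset.Icc 1 T, u t := by
        rw [Finset.sum_add_distrib, ← Finset.sum_div, htel]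
    _ ≤ A / κ + ∑ t ∈ Finset.Icc 1 T, u t := by gcongr; linarith

theorem ogd_dynamic_regret_stochastic_general {Ω : Type*} {mΩ : MeasurableSpace Ω}
    (P : Measure Ω) [IsProbabilityMeasure P]
    (ℱ : Filtration ℕ mΩ)
    (d T : ℕ)
    (γ r b G lam : ℝ) (hγ : 0 < γ)
    (ℓ : ℕ → EuclideanSpace ℝ (Fin d) → ℝ)
    (hdiff : ∀ t, 1 ≤ t → t ≤ T → Differentiable ℝ (ℓ t))
    (hconv : ∀ t, 1 ≤ t → t ≤ T → ConvexOn ℝ Set.univ (ℓ t))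
    (w : ℕ → EuclideanSpace ℝ (Fin d))
    (hw : ∀ t, 1 ≤ t → t ≤ T + 1 → ‖w t‖ ≤ r)
    (θ η : ℕ → Ω → EuclideanSpace ℝ (Fin d))
    (hθmeas : ∀ t, 1 ≤ t → t ≤ T + 1 → StronglyMeasurable[ℱ t] (θ t))
    (hθbd : ∀ t, 1 ≤ t → t ≤ T + 1 → ∀ᵐ ω ∂P, ‖θ t ω‖ ≤ r)
    (hηL2 : ∀ t, 1 ≤ t → t ≤ T → MemLp (η t) 2 P)
    (hupd : ∀ t, 1 ≤ t → t ≤ T → ∀ᵐ ω ∂P, θ (t + 1) ω = θ t ω - γ • η t ω)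
    (hbias : ∀ t, 1 ≤ t → t ≤ T →
      ∀ᵐ ω ∂P, ‖(P[η t|ℱ t]) ω - gradient (ℓ t) (θ t ω)‖ ≤ b)
    (hsecond : ∀ t, 1 ≤ t → t ≤ T → (∫ ω, ‖η t ω‖ ^ 2 ∂P) ≤ G + lam)
    (hint : ∀ t, 1 ≤ t → t ≤ T → Integrable (fun ω => ℓ t (θ t ω)) P) :
    (∫ ω, ∑ t ∈ Finset.Icc 1 T, (ℓ t (θ t ω) - ℓ t (w t)) ∂P) ≤
      2 * (T : ℝ) * b * r + 2 * r ^ 2 / γ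
        + (2 * r / γ) * ∑ t ∈ Finset.Icc 1 T, ‖w t - w (t + 1)‖
        + (T : ℝ) * γ * (G + lam) / 2 := by
  have hround : ∀ t ∈ Finset.Icc 1 T, ∫ ω, (ℓ t (θ t ω) - ℓ t (w t)) ∂P ≤
      (∫ ω, ‖θ t ω - w t‖ ^ 2 ∂P - ∫ ω, ‖θ (t + 1) ω - w (t + 1)‖ ^ 2 ∂P) / (2 * γ)
        + (2 * r / γ * ‖w t - w (t + 1)‖ + (2 * r * b + γ / 2 * (G + lam))) := by
    intro t ht
    obtain ⟨ht1, htT⟩ := Finset.mem_Icc.mp ht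
    refine (integral_sub_le_of_gradient_step (ℱ.le t) (hconv t ht1 htT) (hdiff t ht1 htT) hγ
      (hθmeas t ht1 (by omega)) (hθbd t ht1 (by omega)) (hθbd (t + 1) (by omega) (by omega))
      (hηL2 t ht1 htT) (hupd t ht1 htT) (hbias t ht1 htT) (hint t ht1 htT)
      (hw t ht1 (by omega)) (hw (t + 1) (by omega) (by omega))).trans ?_
    gcongr
    exact hsecond t ht1 htT
  rw [integral_finsetSum (f := fun t ω ↦ ℓ t (θ t ω) - ℓ t (w t)) _ fun t ht ↦
    (hint t (Finset.mem_Icc.mp ht).1 (Finset.mem_Icc.mp ht).2).sub (integrable_const _)]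
  calc _ ≤ (2 * r) ^ 2 / (2 * γ) + ∑ t ∈ Finset.Icc 1 T,
          (2 * r / γ * ‖w t - w (t + 1)‖ + (2 * r * b + γ / 2 * (G + lam))) :=
        sum_Icc_le_of_le_telescoping (by positivity) hround
          (integral_sq_norm_sub_le (hθbd 1 le_rfl (by omega)) (hw 1 le_rfl (by omega)))
          (integral_nonneg fun _ ↦ sq_nonneg _)
    _ = _ := by
      rw [Finset.sum_add_distrib, ← Finset.mul_sum, Finset.sum_const, Nat.card_Icc,
        Nat.add_sub_cancel, nsmul_eq_mul]
      field_simp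
      ring

/-- Dynamic regret bound for online gradient descent with noisy, biased gradient
estimates: with conditional bias bounded by `b`, second moments bounded by `G + λ`,
iterates and deterministic comparators in the ball of radius `r`, the expected dynamic
regret is at most `2Tbr + 2r²/γ + (2r/γ)·V + Tγ(G+λ)/2`. -/
theorem ogd_dynamic_regret_stochastic {Ω : Type*} {mΩ : MeasurableSpace Ω}
    (P : Measure Ω) [IsProbabilityMeasure P]
    (ℱ : Filtration ℕ mΩ)
    (d T : ℕ) (hd : 0 < d) (hT : 0 < T)
    (γ r b G lam : ℝ) (hγ : 0 < γ) (hr : 0 ≤ r) (hb : 0 ≤ b) (hG : 0 ≤ G) (hlam : 0 ≤ lam)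
    (ℓ : ℕ → EuclideanSpace ℝ (Fin d) → ℝ)
    (hdiff : ∀ t, 1 ≤ t → t ≤ T → Differentiable ℝ (ℓ t))
    (hconv : ∀ t, 1 ≤ t → t ≤ T → ConvexOn ℝ Set.univ (ℓ t))
    (w : ℕ → EuclideanSpace ℝ (Fin d))
    (hw : ∀ t, 1 ≤ t → t ≤ T + 1 → ‖w t‖ ≤ r)
    (θ η : ℕ → Ω → EuclideanSpace ℝ (Fin d))
    (hθmeas : ∀ t, 1 ≤ t → t ≤ T + 1 → StronglyMeasurable[ℱ t] (θ t))
    (hθbd : ∀ t, 1 ≤ t → t ≤ T + 1 → ∀ᵐ ω ∂P, ‖θ t ω‖ ≤ r)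
    (hηL2 : ∀ t, 1 ≤ t → t ≤ T → MemLp (η t) 2 P)
    (hupd : ∀ t, 1 ≤ t → t ≤ T → ∀ᵐ ω ∂P, θ (t + 1) ω = θ t ω - γ • η t ω)
    (hbias : ∀ t, 1 ≤ t → t ≤ T →
      ∀ᵐ ω ∂P, ‖(P[η t|ℱ t]) ω - gradient (ℓ t) (θ t ω)‖ ≤ b)
    (hsecond : ∀ t, 1 ≤ t → t ≤ T → (∫ ω, ‖η t ω‖ ^ 2 ∂P) ≤ G + lam)
    (hint : ∀ t, 1 ≤ t → t ≤ T → Integrable (fun ω => ℓ t (θ t ω)) P) :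
    (∫ ω, ∑ t ∈ Finset.Icc 1 T, (ℓ t (θ t ω) - ℓ t (w t)) ∂P) ≤
      2 * (T : ℝ) * b * r + 2 * r ^ 2 / γ
        + (2 * r / γ) * ∑ t ∈ Finset.Icc 1 T, ‖w t - w (t + 1)‖
        + (T : ℝ) * γ * (G + lam) / 2 :=
  ogd_dynamic_regret_stochastic_general P ℱ d T γ r b G lam hγ ℓ hdiff hconv w hw θ η hθmeas hθbd
    hηL2 hupd hbias hsecond hint
end
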